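/- arXiv:1504.00506 — 2 statements merged into one kernel-verified Lean document; each statement's English description precedes it below -/
import Mathlib

section
/- For any T ∈ ℝ with T ≥ 1, the function g(ξ) = ∫_{ℝ³} χ_{||η|−T|≤1}(η) ⟨ξ−η⟩^{−2−ε} dη is bounded on ℝ³ uniformly in T, i.e. sup_{ξ∈ℝ³} g(ξ) ≤ C_ε < ∞ with C_ε independent of T. -/
open MeasureTheory

noncomputable section

abbrev E3 := EuclideanSpace ℝ (Fin 3)

/-- the Japanese bracket `⟨ξ⟩ = (1+|ξ|²)^{1/2}` on `ℝ³` -/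
def jb3 (ξ : E3) : ℝ := Real.sqrt (1 + ‖ξ‖ ^ 2)

/-!
By the layer-cake formula the integral is `∫₀¹ |A ∩ {η : ⟨ξ - η⟩^{-2-ε} > t}| dt`, where
`A = {η : ||η| - T| ≤ 1}`, and the superlevel set lies in the ball `B(ξ, t^{-1/(2+ε)})`.
The geometric input is that `A` meets every ball `B(ξ, r)` in volume `O(r²)`, uniformly in
`T ≥ 1`. For `r > T/2` this follows from `|A| = O(T²)`. For `r ≤ T/2`, take orthonormal
coordinates whose first axis passes through `ξ`: the intersection lies in the cylinder of
cross-section `B²(0, r)` around that axis, and each line parallel to the axis through that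
disc meets `A` in length `O(1)`. Hence the integral is `O(∫₀¹ t^{-2/(2+ε)} dt) = O((2+ε)/ε)`.
-/

open Set Metric Module
open scoped ENNReal RealInnerProductSpace

lemma lintegral_ofReal_le_of_meas_lt_le_rpow {α : Type*} [MeasurableSpace α] {μ : Measure α}
    {f : α → ℝ} {A : ℝ≥0∞} {β : ℝ} (hβ : β < 1) (hf_nonneg : 0 ≤ᵐ[μ] f)
    (hf_le_one : ∀ᵐ x ∂μ, f x ≤ 1) (hf : AEMeasurable f μ)
    (hμ : ∀ t ∈ Ioc (0 : ℝ) 1, μ {x | t < f x} ≤ A * ENNReal.ofReal (t ^ (-β))) :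
    ∫⁻ x, ENNReal.ofReal (f x) ∂μ ≤ A * ENNReal.ofReal (1 - β)⁻¹ := by
  have hμ' : ∀ t ∈ Ioi (0 : ℝ),
      μ {x | t < f x} ≤ (Ioc 0 1).indicator (fun t => A * ENNReal.ofReal (t ^ (-β))) t := by
    intro t ht
    by_cases ht1 : t ≤ 1
    · rw [indicator_of_mem (show t ∈ Ioc 0 1 from ⟨ht, ht1⟩)]
      exact hμ t ⟨ht, ht1⟩
    · refine (measure_mono_null (fun x hx hx1 => ?_) (ae_iff.mp hf_le_one)).trans_le zero_le
      exact ht1 ((le_of_lt hx).trans hx1)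
  have hint : ∫ t in Ioc (0 : ℝ) 1, t ^ (-β) = (1 - β)⁻¹ := by
    rw [← intervalIntegral.integral_of_le zero_le_one, integral_rpow (by left; linarith),
      Real.one_rpow, Real.zero_rpow (by linarith)]
    field_simp
    ring
  calc ∫⁻ x, ENNReal.ofReal (f x) ∂μ
      = ∫⁻ t in Ioi 0, μ {x | t < f x} := lintegral_eq_lintegral_meas_lt μ hf_nonneg hf
    _ ≤ ∫⁻ t in Ioi 0, (Ioc 0 1).indicator (fun t => A * ENNReal.ofReal (t ^ (-β))) t :=
        setLIntegral_mono' measurableSet_Ioi hμ'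
    _ = A * ∫⁻ t in Ioc 0 1, ENNReal.ofReal (t ^ (-β)) := by
        rw [lintegral_indicator measurableSet_Ioc, Measure.restrict_restrict measurableSet_Ioc,
          inter_eq_self_of_subset_left Ioc_subset_Ioi_self, lintegral_const_mul _ (by fun_prop)]
    _ = A * ENNReal.ofReal (1 - β)⁻¹ := by
        rw [← hint, ofReal_integral_eq_lintegral_ofReal]
        · exact (intervalIntegrable_iff_integrableOn_Ioc_of_le zero_le_one).mp
            (intervalIntegral.intervalIntegrable_rpow' (by linarith))
        · exact (ae_restrict_iff' measurableSet_Ioc).mpr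
            (ae_of_all _ fun t ht => Real.rpow_nonneg ht.1.le _)

lemma volume_setOf_abs_mem_Icc_le (a b : ℝ) :
    volume {t : ℝ | a ≤ |t| ∧ |t| ≤ b} ≤ ENNReal.ofReal (2 * (b - a)) := by
  have hsub : {t : ℝ | a ≤ |t| ∧ |t| ≤ b} ⊆ Icc (-b) (-a) ∪ Icc a b := by
    rintro t ⟨hat, htb⟩
    rcases le_or_gt 0 t with ht | ht
    · rw [abs_of_nonneg ht] at hat htb
      exact Or.inr ⟨hat, htb⟩
    · rw [abs_of_neg ht] at hat htb
      exact Or.inl ⟨by linarith, by linarith⟩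
  calc volume {t : ℝ | a ≤ |t| ∧ |t| ≤ b}
      ≤ volume (Icc (-b) (-a)) + volume (Icc a b) :=
        (measure_mono hsub).trans (measure_union_le _ _)
    _ = ENNReal.ofReal (2 * (b - a)) := by
        rw [Real.volume_Icc, Real.volume_Icc, ENNReal.ofReal_mul zero_le_two, sub_neg_eq_add,
          neg_add_eq_sub, ENNReal.ofReal_ofNat, two_mul]

lemma volume_slice_shell_le {T c : ℝ} (hT : 1 ≤ T) (hcT : c ≤ T ^ 2 / 4) :
    volume {t : ℝ | (T - 1) ^ 2 ≤ t ^ 2 + c ∧ t ^ 2 + c ≤ (T + 1) ^ 2} ≤ ENNReal.ofReal 10 := by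
  -- if `(T - 1) ^ 2 < c`, then `a = 0` by the junk value of `√`, which is the right inner radius
  set a := √((T - 1) ^ 2 - c)
  set b := √((T + 1) ^ 2 - c)
  have hsub : {t : ℝ | (T - 1) ^ 2 ≤ t ^ 2 + c ∧ t ^ 2 + c ≤ (T + 1) ^ 2} ⊆
      {t : ℝ | a ≤ |t| ∧ |t| ≤ b} := by
    rintro t ⟨h1, h2⟩
    simp only [mem_ofPred_eq, ← Real.sqrt_sq_eq_abs]
    exact ⟨Real.sqrt_le_sqrt (by linarith), Real.sqrt_le_sqrt (by linarith)⟩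
  have ha : (T - 1) ^ 2 - c ≤ a ^ 2 := by rw [Real.sq_sqrt']; exact le_max_left _ _
  have hb : b ^ 2 = (T + 1) ^ 2 - c := Real.sq_sqrt (by nlinarith)
  -- `b - a ≤ (b ^ 2 - a ^ 2) / b ≤ 4 T / b`, and `b ≥ 4 T / 5` because `c ≤ T ^ 2 / 4`
  have hb_ge : 4 * T / 5 ≤ b := Real.le_sqrt_of_sq_le (by nlinarith)
  have hab : b - a ≤ 5 := by
    nlinarith [Real.sqrt_nonneg ((T - 1) ^ 2 - c)]
  refine (measure_mono hsub).trans ((volume_setOf_abs_mem_Icc_le a b).trans ?_)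
  exact ENNReal.ofReal_le_ofReal (by linarith)

lemma measure_prod_le_of_slice_le {α β : Type*} [MeasurableSpace α] [MeasurableSpace β]
    {μ : Measure α} {ν : Measure β} [SFinite μ] [SFinite ν] {s : Set (α × β)} {t : Set β}
    {c : ℝ≥0∞} (hs : MeasurableSet s) (hst : ∀ p ∈ s, p.2 ∈ t)
    (hc : ∀ y ∈ t, μ ((·, y) ⁻¹' s) ≤ c) :
    μ.prod ν s ≤ c * ν t := by
  rw [Measure.prod_apply_symm hs]
  refine (lintegral_mono fun y => ?_).trans (lintegral_indicator_const_le t c)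
  by_cases hy : y ∈ t
  · simpa [indicator_of_mem hy] using hc y hy
  · have : (·, y) ⁻¹' s = ∅ := eq_empty_of_forall_notMem fun x hx => hy (hst _ hx)
    simp [this]

lemma volume_prod_shell_inter_cylinder_le {F : Type*} [NormedAddCommGroup F] [MeasurableSpace F]
    [OpensMeasurableSpace F] (μ : Measure F) [SFinite μ] {T r : ℝ} (hT : 1 ≤ T) (hrT : r ≤ T / 2) :
    (volume.prod μ) {p : ℝ × F | (T - 1) ^ 2 ≤ p.1 ^ 2 + ‖p.2‖ ^ 2 ∧
        p.1 ^ 2 + ‖p.2‖ ^ 2 ≤ (T + 1) ^ 2 ∧ ‖p.2‖ ≤ r}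
      ≤ ENNReal.ofReal 10 * μ (closedBall 0 r) := by
  refine measure_prod_le_of_slice_le (by measurability) (fun p hp => ?_) fun z hz => ?_
  · exact mem_closedBall_zero_iff.mpr hp.2.2
  · rw [mem_closedBall_zero_iff] at hz
    refine (measure_mono ?_).trans (volume_slice_shell_le (c := ‖z‖ ^ 2) hT ?_)
    · rintro t ⟨h1, h2, -⟩
      exact ⟨h1, h2⟩
    · nlinarith [norm_nonneg z]

lemma exists_measurePreserving_inner_prod {E : Type*} [NormedAddCommGroup E]
    [InnerProductSpace ℝ E] [FiniteDimensional ℝ E] [MeasurableSpace E] [BorelSpace E] {n : ℕ}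
    (hn : finrank ℝ E = n + 1) {u : E} (hu : ‖u‖ = 1) :
    ∃ Φ : E → ℝ × EuclideanSpace ℝ (Fin n), MeasurePreserving Φ ∧
      ∀ x, (Φ x).1 = ⟪u, x⟫ ∧ ‖x‖ ^ 2 = (Φ x).1 ^ 2 + ‖(Φ x).2‖ ^ 2 := by
  obtain ⟨b, hb⟩ := Orthonormal.exists_orthonormalBasis_extension_of_card_eq
    (ι := Fin (n + 1)) (by simpa using hn) (v := fun _ => u) (s := {0})
    (orthonormal_subsingleton_iff.mpr fun _ => hu)
  have hΦ : MeasurePreserving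
      (fun x : E => (b.repr x 0, WithLp.toLp 2 fun i : Fin n => b.repr x i.succ)) := by
    have := ((MeasurePreserving.id volume).prod (PiLp.volume_preserving_toLp (Fin n))).comp
      ((volume_preserving_piFinSuccAbove (fun _ : Fin (n + 1) => ℝ) 0).comp
        ((PiLp.volume_preserving_ofLp (Fin (n + 1))).comp b.measurePreserving_repr))
    convert this using 1
    · rfl
    · ext x <;> simp [Fin.tail]
    · exact (Measure.volume_eq_prod _ _).symm
  refine ⟨_, hΦ, fun x => ⟨?_, ?_⟩⟩
  · rw [b.repr_apply_apply, hb 0 rfl]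
  · rw [← b.repr.norm_map, EuclideanSpace.real_norm_sq_eq, EuclideanSpace.real_norm_sq_eq,
      Fin.sum_univ_succ]

lemma volume_annulus_le {T : ℝ} (hT : 1 ≤ T) :
    volume {η : E3 | |‖η‖ - T| ≤ 1} ≤ ENNReal.ofReal (34 * T ^ 2) := by
  have hsub : {η : E3 | |‖η‖ - T| ≤ 1} ⊆ closedBall 0 (T + 1) \ ball 0 (T - 1) := by
    intro η hη
    rw [mem_ofPred_eq, abs_le] at hη
    simp only [mem_sdiff, mem_closedBall_zero_iff, mem_ball_zero_iff, not_lt]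
    constructor <;> linarith
  refine (measure_mono hsub).trans ?_
  rw [measure_sdiff (ball_subset_closedBall.trans (closedBall_subset_closedBall (by linarith)))
      measurableSet_ball.nullMeasurableSet measure_ball_lt_top.ne,
    EuclideanSpace.volume_closedBall_fin_three, EuclideanSpace.volume_ball_fin_three,
    ← ENNReal.ofReal_pow (by linarith), ← ENNReal.ofReal_pow (by linarith),
    ← ENNReal.ofReal_mul (by positivity), ← ENNReal.ofReal_mul (pow_nonneg (by linarith) 3),
    ← ENNReal.ofReal_sub _ (mul_nonneg (pow_nonneg (by linarith) 3) (by positivity))]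
  refine ENNReal.ofReal_le_ofReal ?_
  nlinarith [Real.pi_lt_d2, Real.pi_pos]

lemma volume_annulus_inter_closedBall_le {T r : ℝ} (hT : 1 ≤ T) (hr : 0 ≤ r) (ξ : E3) :
    volume ({η : E3 | |‖η‖ - T| ≤ 1} ∩ closedBall ξ r) ≤ ENNReal.ofReal (136 * r ^ 2) := by
  rcases lt_or_ge (T / 2) r with hrT | hrT
  · refine (measure_mono inter_subset_left).trans ((volume_annulus_le hT).trans ?_)
    exact ENNReal.ofReal_le_ofReal (by nlinarith)
  obtain ⟨u, hu, c, rfl⟩ : ∃ u : E3, ‖u‖ = 1 ∧ ∃ c : ℝ, ξ = c • u := by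
    rcases eq_or_ne ξ 0 with rfl | hξ
    · obtain ⟨u, hu⟩ := exists_norm_eq E3 zero_le_one
      exact ⟨u, hu, 0, by simp⟩
    · exact ⟨‖ξ‖⁻¹ • ξ, norm_smul_inv_norm hξ, ‖ξ‖,
        (smul_inv_smul₀ (norm_ne_zero_iff.mpr hξ) ξ).symm⟩
  obtain ⟨Φ, hΦ, hΦu⟩ := exists_measurePreserving_inner_prod (n := 2) (by simp) hu
  set cyl := {p : ℝ × EuclideanSpace ℝ (Fin 2) | (T - 1) ^ 2 ≤ p.1 ^ 2 + ‖p.2‖ ^ 2 ∧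
    p.1 ^ 2 + ‖p.2‖ ^ 2 ≤ (T + 1) ^ 2 ∧ ‖p.2‖ ≤ r}
  have hsub : {η : E3 | |‖η‖ - T| ≤ 1} ∩ closedBall (c • u) r ⊆ Φ ⁻¹' cyl := by
    rintro η ⟨hη, hηξ⟩
    obtain ⟨hΦ₁, hΦnorm⟩ := hΦu η
    rw [mem_ofPred_eq, abs_le] at hη
    rw [mem_closedBall, dist_eq_norm] at hηξ
    have hdist : ‖η - c • u‖ ^ 2 = ((Φ η).1 - c) ^ 2 + ‖(Φ η).2‖ ^ 2 := by
      rw [norm_sub_sq_real, inner_smul_right, norm_smul, mul_pow, Real.norm_eq_abs, sq_abs, hu,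
        real_inner_comm, ← hΦ₁]
      linarith
    refine ⟨?_, ?_, ?_⟩
    · rw [← hΦnorm]; nlinarith [norm_nonneg η]
    · rw [← hΦnorm]; nlinarith [norm_nonneg η]
    · nlinarith [norm_nonneg (η - c • u), norm_nonneg (Φ η).2, sq_nonneg ((Φ η).1 - c)]
  calc volume ({η : E3 | |‖η‖ - T| ≤ 1} ∩ closedBall (c • u) r)
      ≤ volume (Φ ⁻¹' cyl) := measure_mono hsub
    _ = volume cyl := hΦ.measure_preimage (by measurability)
    _ ≤ ENNReal.ofReal 10 * volume (closedBall (0 : EuclideanSpace ℝ (Fin 2)) r) := by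
        rw [Measure.volume_eq_prod]
        exact volume_prod_shell_inter_cylinder_le volume hT hrT
    _ ≤ ENNReal.ofReal (136 * r ^ 2) := by
        rw [EuclideanSpace.volume_closedBall_fin_two, ← ENNReal.ofReal_pow hr,
          ← ENNReal.ofReal_mul (by positivity), ← ENNReal.ofReal_mul (by norm_num)]
        exact ENNReal.ofReal_le_ofReal (by nlinarith [Real.pi_lt_d2])

lemma one_le_jb3 (x : E3) : 1 ≤ jb3 x :=
  Real.one_le_sqrt.mpr (by nlinarith [sq_nonneg ‖x‖])

lemma norm_le_jb3 (x : E3) : ‖x‖ ≤ jb3 x :=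
  Real.le_sqrt_of_sq_le (by linarith)

@[fun_prop]
lemma continuous_jb3 : Continuous jb3 := by
  unfold jb3; fun_prop

lemma norm_lt_of_lt_jb3_rpow_neg {s t : ℝ} (hs : 0 < s) (ht : 0 < t) {x : E3}
    (h : t < jb3 x ^ (-s)) : ‖x‖ < t ^ (-s⁻¹) := by
  refine (norm_le_jb3 x).trans_lt ?_
  rw [← inv_neg, Real.lt_rpow_inv_iff_of_neg (by linarith [one_le_jb3 x]) ht (by linarith)]
  exact h

lemma volume_annulus_inter_superlevel_le {s t T : ℝ} (hs : 0 < s) (ht : 0 < t) (hT : 1 ≤ T)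
    (ξ : E3) :
    volume ({η : E3 | |‖η‖ - T| ≤ 1} ∩ {η | t < jb3 (ξ - η) ^ (-s)})
      ≤ ENNReal.ofReal 136 * ENNReal.ofReal (t ^ (-(2 / s))) := by
  have hsub : {η | t < jb3 (ξ - η) ^ (-s)} ⊆ closedBall ξ (t ^ (-s⁻¹)) := fun η hη => by
    rw [mem_closedBall, dist_comm, dist_eq_norm]
    exact (norm_lt_of_lt_jb3_rpow_neg hs ht hη).le
  calc _ ≤ volume ({η : E3 | |‖η‖ - T| ≤ 1} ∩ closedBall ξ (t ^ (-s⁻¹))) :=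
        measure_mono (inter_subset_inter_right _ hsub)
    _ ≤ ENNReal.ofReal (136 * (t ^ (-s⁻¹)) ^ 2) :=
        volume_annulus_inter_closedBall_le hT (Real.rpow_pos_of_pos ht _).le ξ
    _ = ENNReal.ofReal 136 * ENNReal.ofReal (t ^ (-(2 / s))) := by
        rw [ENNReal.ofReal_mul (by norm_num), ← Real.rpow_natCast, ← Real.rpow_mul ht.le]
        congr 3
        push_cast
        ring

/-- The convolution of the indicator of the annulus `{η : ||η|−T| ≤ 1}` with
`⟨·⟩^{−2−ε}` is bounded on `ℝ³` uniformly in `T ≥ 1`. -/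
theorem annulus_convolution_bound (ε : ℝ) (hε : 0 < ε) :
    ∃ C : ℝ, 0 < C ∧ ∀ T : ℝ, 1 ≤ T → ∀ ξ : E3,
      ∫⁻ η : E3, Set.indicator {η : E3 | |‖η‖ - T| ≤ 1}
          (fun η => ENNReal.ofReal (jb3 (ξ - η) ^ (-(2:ℝ) - ε))) η
        ≤ ENNReal.ofReal C := by
  refine ⟨136 * ((2 + ε) / ε), by positivity, fun T hT ξ => ?_⟩
  have hs : 0 < 2 + ε := by linarith
  have hA : MeasurableSet {η : E3 | |‖η‖ - T| ≤ 1} :=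
    measurableSet_le (by fun_prop) measurable_const
  simp_rw [← neg_add']
  rw [lintegral_indicator hA]
  calc _ ≤ ENNReal.ofReal 136 * ENNReal.ofReal (1 - 2 / (2 + ε))⁻¹ :=
        lintegral_ofReal_le_of_meas_lt_le_rpow (by rw [div_lt_one hs]; linarith)
          (ae_of_all _ fun η => Real.rpow_nonneg (zero_le_one.trans (one_le_jb3 _)) _)
          (ae_of_all _ fun η => Real.rpow_le_one_of_one_le_of_nonpos (one_le_jb3 _) (by linarith))
          (by fun_prop) fun t ht => by
            rw [Measure.restrict_apply' hA, inter_comm]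
            exact volume_annulus_inter_superlevel_le hs ht.1 hT ξ
    _ = ENNReal.ofReal (136 * ((2 + ε) / ε)) := by
        rw [← ENNReal.ofReal_mul (by norm_num)]
        congr 2
        field_simp [hε.ne']
        ring
end
end

section
/- Suppose u : ℝ×ℝ³ → ℂ is a tempered distribution whose space-time Fourier transform û(τ,ξ) is supported in the region {||τ|−|ξ|| ≥ c|ξ|} for some c > 0. Then for any s ∈ ℝ, ‖u‖_{X^{s+1/4−ε, 1/2+ε}_{τ=0}} ≤ C ‖u‖_{X^{s, 3/4}_{|τ|=|ξ|}}, for 0 < ε ≤ 1/4, where C depends on c and ε. -/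
open MeasureTheory
open scoped ENNReal

noncomputable section

/-- the Japanese bracket `⟨x⟩ = (1+|x|²)^{1/2}` -/
def jb (x : ℝ) : ℝ := Real.sqrt (1 + x ^ 2)

/-- the `X^{s,b}_{|τ|=|ξ|}` norm of a space-time Fourier transform `F(τ,ξ)` -/
def Xwave (s b : ℝ) (F : ℝ × E3 → ℂ) : ℝ≥0∞ :=
  eLpNorm (fun p : ℝ × E3 => jb ‖p.2‖ ^ s * jb (|p.1| - ‖p.2‖) ^ b * ‖F p‖) 2 volume

/-- the `X^{s,b}_{τ=0}` norm of a space-time Fourier transform `F(τ,ξ)` -/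
def Xzero (s b : ℝ) (F : ℝ × E3 → ℂ) : ℝ≥0∞ :=
  eLpNorm (fun p : ℝ × E3 => jb ‖p.2‖ ^ s * jb p.1 ^ b * ‖F p‖) 2 volume

/-! On the region `c|ξ| ≤ ||τ| - |ξ||` the hyperbolic weight `⟨|τ| - |ξ|⟩` dominates both `⟨ξ⟩` and
`⟨τ⟩` up to the factor `1 + c⁻¹`, so any nonnegative split `a + b` of its exponent can be moved
onto `⟨ξ⟩^a ⟨τ⟩^b`; with `a = 1/4 - ε`, `b = 1/2 + ε` this is the theorem. -/

lemma jb_pos (x : ℝ) : 0 < jb x := Real.sqrt_pos.mpr (by positivity)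

lemma jb_le_mul_jb_of_abs_le {x y M : ℝ} (hM : 1 ≤ M) (h : |x| ≤ M * |y|) : jb x ≤ M * jb y := by
  have hsq : x ^ 2 ≤ M ^ 2 * y ^ 2 := by
    rw [← sq_abs x, ← sq_abs y, ← mul_pow]
    exact pow_le_pow_left₀ (abs_nonneg x) h 2
  calc jb x ≤ Real.sqrt (M ^ 2 * (1 + y ^ 2)) := Real.sqrt_le_sqrt (by nlinarith)
    _ = M * jb y := by rw [Real.sqrt_mul (by positivity), Real.sqrt_sq (by linarith)]; rfl

lemma le_inv_mul_abs_of_elliptic {c r t : ℝ} (hc : 0 < c) (hreg : c * r ≤ |(|t| - r)|) :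
    r ≤ c⁻¹ * |(|t| - r)| := by
  rw [inv_mul_eq_div, le_div_iff₀ hc, mul_comm]
  exact hreg

lemma jb_space_le_of_elliptic {c r t : ℝ} (hc : 0 < c) (hr : 0 ≤ r)
    (hreg : c * r ≤ |(|t| - r)|) :
    jb r ≤ (1 + c⁻¹) * jb (|t| - r) := by
  have := le_inv_mul_abs_of_elliptic hc hreg
  refine jb_le_mul_jb_of_abs_le (by simp [inv_nonneg.mpr hc.le]) ?_
  rw [abs_of_nonneg hr]
  nlinarith [abs_nonneg (|t| - r)]

lemma jb_time_le_of_elliptic {c r t : ℝ} (hc : 0 < c) (hreg : c * r ≤ |(|t| - r)|) :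
    jb t ≤ (1 + c⁻¹) * jb (|t| - r) := by
  have := le_inv_mul_abs_of_elliptic hc hreg
  refine jb_le_mul_jb_of_abs_le (by simp [inv_nonneg.mpr hc.le]) ?_
  have : |t| - r ≤ |(|t| - r)| := le_abs_self _
  nlinarith

lemma jb_rpow_mul_jb_rpow_le_of_elliptic {c r t a b : ℝ} (hc : 0 < c) (hr : 0 ≤ r)
    (hreg : c * r ≤ |(|t| - r)|) (ha : 0 ≤ a) (hb : 0 ≤ b) :
    jb r ^ a * jb t ^ b ≤ (1 + c⁻¹) ^ (a + b) * jb (|t| - r) ^ (a + b) := by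
  have hM : 0 ≤ 1 + c⁻¹ := by positivity
  have hd := (jb_pos (|t| - r)).le
  calc jb r ^ a * jb t ^ b
      ≤ ((1 + c⁻¹) * jb (|t| - r)) ^ a * ((1 + c⁻¹) * jb (|t| - r)) ^ b :=
        mul_le_mul (Real.rpow_le_rpow (jb_pos r).le (jb_space_le_of_elliptic hc hr hreg) ha)
          (Real.rpow_le_rpow (jb_pos t).le (jb_time_le_of_elliptic hc hreg) hb)
          (Real.rpow_nonneg (jb_pos t).le b) (Real.rpow_nonneg (by positivity) a)
    _ = (1 + c⁻¹) ^ (a + b) * jb (|t| - r) ^ (a + b) := by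
        rw [← Real.rpow_add_of_nonneg (by positivity) ha hb, Real.mul_rpow hM hd]

theorem Xzero_le_Xwave_of_elliptic {c a b : ℝ} (s : ℝ) (hc : 0 < c) (ha : 0 ≤ a) (hb : 0 ≤ b)
    {F : ℝ × E3 → ℂ} (hF : ∀ p : ℝ × E3, F p ≠ 0 → c * ‖p.2‖ ≤ |(|p.1| - ‖p.2‖)|) :
    Xzero (s + a) b F ≤ ENNReal.ofReal ((1 + c⁻¹) ^ (a + b)) * Xwave s (a + b) F := by
  refine eLpNorm_le_mul_eLpNorm_of_ae_le_mul (Filter.Eventually.of_forall fun p => ?_) 2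
  rcases eq_or_ne (F p) 0 with hFp | hFp
  · simp [hFp]
  have hweight := jb_rpow_mul_jb_rpow_le_of_elliptic hc (norm_nonneg p.2) (hF p hFp) ha hb
  have hs := Real.rpow_nonneg (jb_pos ‖p.2‖).le s
  simp only [norm_mul, Real.norm_eq_abs, abs_norm,
    abs_of_pos (Real.rpow_pos_of_pos (jb_pos _) _), Real.rpow_add (jb_pos ‖p.2‖)]
  calc jb ‖p.2‖ ^ s * jb ‖p.2‖ ^ a * jb p.1 ^ b * ‖F p‖
      = jb ‖p.2‖ ^ s * (jb ‖p.2‖ ^ a * jb p.1 ^ b) * ‖F p‖ := by ring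
    _ ≤ jb ‖p.2‖ ^ s * ((1 + c⁻¹) ^ (a + b) * jb (|p.1| - ‖p.2‖) ^ (a + b)) * ‖F p‖ := by
        gcongr
    _ = _ := by ring

/-- If the space-time Fourier transform of `u` is supported in
`{||τ|−|ξ|| ≥ c|ξ|}`, then `‖u‖_{X^{s+1/4−ε,1/2+ε}_{τ=0}} ≤ C‖u‖_{X^{s,3/4}_{|τ|=|ξ|}}`
for `0 < ε ≤ 1/4`. -/
theorem elliptic_region_transfer (c ε s : ℝ) (hc : 0 < c) (hε : 0 < ε)
    (hε' : ε ≤ 1 / 4) :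
    ∃ C : ℝ, 0 < C ∧ ∀ F : ℝ × E3 → ℂ,
      (∀ p : ℝ × E3, F p ≠ 0 → c * ‖p.2‖ ≤ |(|p.1| - ‖p.2‖)|) →
      Xzero (s + 1/4 - ε) (1/2 + ε) F ≤ ENNReal.ofReal C * Xwave s (3/4) F := by
  refine ⟨(1 + c⁻¹) ^ (3 / 4 : ℝ), by positivity, fun F hF => ?_⟩
  have h := Xzero_le_Xwave_of_elliptic s hc (sub_nonneg.mpr hε') (b := 1 / 2 + ε) (by linarith) hF
  rwa [← add_sub_assoc, show (1 / 4 - ε) + (1 / 2 + ε) = (3 / 4 : ℝ) by ring] at h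
end
end
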